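/- arXiv:2202.09055 — 2 statements merged into one kernel-verified Lean document; each statement's English description precedes it below -/
import Mathlib

section
/- For every α ∈ (0,1) there exists a constant C = C(α,T) > 0 such that for all x ∈ [0,π] and all 0 ≤ s < t ≤ T, ∫_0^s ∫_0^π |G_{t−r}(x,z) − G_{s−r}(x,z)|² dz dr + ∫_s^t ∫_0^π |G_{t−r}(x,z)|² dz dr ≤ C|t−s|^{(3/4)α}. -/
/-- `φ_j(x) = √(2/π)·sin(jx)`. -/
noncomputable def phi (j : ℕ) (x : ℝ) : ℝ := Real.sqrt (2 / Real.pi) * Real.sin (j * x)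

/-- The Green function `G_t(x,y) = Σ_{j=1}^∞ e^{−j⁴t} φ_j(x) φ_j(y)` of `∂_t + Δ²`
on `(0,π)` with Dirichlet boundary conditions. -/
noncomputable def G (t x y : ℝ) : ℝ :=
  ∑' j : ℕ, Real.exp (-((j : ℝ) + 1) ^ 4 * t) * phi (j + 1) x * phi (j + 1) y

open MeasureTheory Real

/-! By Parseval for the orthonormal system `φ_j`, `∫₀^π G_u(x,z)² dz = Σ_j e^{-2j⁴u} φ_j(x)²`,
and `φ_j(x)² ≤ 2/π`. The elementary bounds `e^{-y} ≤ y^{-β}` (`0 ≤ β ≤ 1`) and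
`(1 - e^{-w})² ≤ w^γ` (`0 ≤ γ ≤ 2`) then give
`∫|G_u(x,·)|² ≲ u^{-β} Σ_j j^{-4β}` and `∫|G_{b+δ}(x,·) - G_b(x,·)|² ≲ δ^γ b^{-β} Σ_j j^{4(γ-β)}`.
The series converge for `4β > 1`, resp. `4(β - γ) > 1`, and the singularities `(t-r)^{γ-1}`,
`(s-r)^{-β}` are integrable in `r` for `γ > 0`, `β < 1`; with `γ = 3α/4 < 3/4` all of this
can be arranged, and integrating in `r` yields the factor `(t-s)^γ`. -/

lemma intervalIntegral_tsum_of_abs_le {f : ℕ → ℝ → ℝ} {b : ℕ → ℝ} {a c : ℝ}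
    (hf : ∀ n, Continuous (f n)) (hfb : ∀ n z, |f n z| ≤ b n) (hb : Summable b) :
    ∫ z in a..c, ∑' n, f n z = ∑' n, ∫ z in a..c, f n z :=
  ((intervalIntegral.hasSum_integral_of_dominated_convergence (fun n _ => b n)
    (fun n => (hf n).aestronglyMeasurable) (fun n => ae_of_all _ fun z _ => hfb n z)
    (ae_of_all _ fun _ _ => hb) intervalIntegrable_const
    (ae_of_all _ fun z _ => (hb.of_norm_bounded (hfb · z)).hasSum)).tsum_eq).symm

lemma integral_cos_int_mul (k : ℤ) :
    ∫ z in (0 : ℝ)..π, cos (k * z) = if k = 0 then π else 0 := by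
  split_ifs with hk
  · simp [hk]
  · have hk' : (k : ℝ) ≠ 0 := by exact_mod_cast hk
    rw [intervalIntegral.integral_comp_mul_left (fun z => cos z) hk', integral_cos]
    simp [sin_int_mul_pi]

lemma phi_mul_phi (m n : ℕ) (z : ℝ) :
    phi m z * phi n z = (cos (((m - n : ℤ) : ℝ) * z) - cos (((m + n : ℤ) : ℝ) * z)) / π := by
  have h := two_mul_sin_mul_sin (m * z) (n * z)
  have hπ : π ≠ 0 := pi_ne_zero
  simp only [phi]
  push_cast
  rw [mul_mul_mul_comm, mul_self_sqrt (by positivity), sub_mul, add_mul, ← h]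
  field_simp

lemma integral_phi_mul_phi {m n : ℕ} (hm : 0 < m) (hn : 0 < n) :
    ∫ z in (0 : ℝ)..π, phi m z * phi n z = if m = n then 1 else 0 := by
  have hcos (k : ℤ) : IntervalIntegrable (fun z => cos (k * z)) volume 0 π :=
    (by fun_prop : Continuous fun z : ℝ => cos (k * z)).intervalIntegrable _ _
  simp_rw [phi_mul_phi]
  have hmn : (m + n : ℤ) ≠ 0 := by omega
  rw [intervalIntegral.integral_div, intervalIntegral.integral_sub (hcos _) (hcos _),
    integral_cos_int_mul, integral_cos_int_mul, if_neg hmn]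
  simp only [sub_eq_zero, Nat.cast_inj, sub_zero]
  split_ifs
  · exact div_self pi_ne_zero
  · exact zero_div π

lemma continuous_phi (j : ℕ) : Continuous (phi j) := by
  unfold phi; fun_prop

lemma abs_phi_le (j : ℕ) (z : ℝ) : |phi j z| ≤ √(2 / π) := by
  rw [phi, abs_mul, abs_of_nonneg (sqrt_nonneg _)]
  exact mul_le_of_le_one_right (sqrt_nonneg _) (abs_sin_le_one _)

lemma phi_sq_le (j : ℕ) (z : ℝ) : phi j z ^ 2 ≤ 2 / π := by
  rw [← sq_abs, ← sq_sqrt (by positivity : (0 : ℝ) ≤ 2 / π)]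
  exact pow_le_pow_left₀ (abs_nonneg _) (abs_phi_le j z) 2

lemma abs_mul_phi_le (a : ℝ) (j : ℕ) (z : ℝ) : |a * phi j z| ≤ |a| * √(2 / π) := by
  rw [abs_mul]
  exact mul_le_mul_of_nonneg_left (abs_phi_le j z) (abs_nonneg a)

section SineSeries

variable {a : ℕ → ℝ}

lemma summable_abs_mul_phi (ha : Summable fun j => |a j|) (z : ℝ) :
    Summable fun j => |a j * phi (j + 1) z| :=
  (ha.mul_right _).of_nonneg_of_le (fun _ => abs_nonneg _) fun _ => abs_mul_phi_le _ _ _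

lemma abs_tsum_mul_phi_le (ha : Summable fun j => |a j|) (z : ℝ) :
    |∑' j, a j * phi (j + 1) z| ≤ (∑' j, |a j|) * √(2 / π) := by
  rw [← tsum_mul_right]
  have h := norm_tsum_le_tsum_norm (f := fun j => a j * phi (j + 1) z) (summable_abs_mul_phi ha z)
  simp only [Real.norm_eq_abs] at h
  exact h.trans
    ((summable_abs_mul_phi ha z).tsum_le_tsum (fun _ => abs_mul_phi_le _ _ _) (ha.mul_right _))

lemma continuous_tsum_mul_phi (ha : Summable fun j => |a j|) :
    Continuous fun z => ∑' j, a j * phi (j + 1) z :=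
  continuous_tsum (fun _ => continuous_const.mul (continuous_phi _)) (ha.mul_right _)
    fun _ _ => abs_mul_phi_le _ _ _

lemma integral_tsum_mul_phi_mul_phi (ha : Summable fun j => |a j|) (k : ℕ) :
    ∫ z in (0 : ℝ)..π, (∑' j, a j * phi (j + 1) z) * phi (k + 1) z = a k := by
  simp_rw [← tsum_mul_right]
  rw [intervalIntegral_tsum_of_abs_le (f := fun j z => a j * phi (j + 1) z * phi (k + 1) z)
    (b := fun j => |a j| * √(2 / π) * √(2 / π))
    (fun _ => (continuous_const.mul (continuous_phi _)).mul (continuous_phi _))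
    (fun _ _ => by
      rw [abs_mul]
      exact mul_le_mul (abs_mul_phi_le _ _ _) (abs_phi_le _ _) (abs_nonneg _) (by positivity))
    ((ha.mul_right _).mul_right _)]
  simp_rw [mul_assoc, intervalIntegral.integral_const_mul,
    integral_phi_mul_phi (Nat.succ_pos _) (Nat.succ_pos _), Nat.succ_inj, mul_ite, mul_one,
    mul_zero]
  exact tsum_ite_eq k a

theorem integral_tsum_mul_phi_sq (ha : Summable fun j => |a j|) :
    ∫ z in (0 : ℝ)..π, (∑' j, a j * phi (j + 1) z) ^ 2 = ∑' j, a j ^ 2 := by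
  have hS : ∀ z, (∑' j, a j * phi (j + 1) z) ^ 2
      = ∑' k, a k * phi (k + 1) z * ∑' j, a j * phi (j + 1) z := fun z => by
    rw [sq, tsum_mul_right]
  simp_rw [hS]
  rw [intervalIntegral_tsum_of_abs_le (f := fun k z => a k * phi (k + 1) z * ∑' j, a j * phi (j + 1) z)
    (b := fun k => |a k| * √(2 / π) * ((∑' j, |a j|) * √(2 / π)))
    (fun _ => (continuous_const.mul (continuous_phi _)).mul (continuous_tsum_mul_phi ha))
    (fun _ z => by
      rw [abs_mul]
      exact mul_le_mul (abs_mul_phi_le _ _ _) (abs_tsum_mul_phi_le ha z) (abs_nonneg _)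
        (by positivity))
    (ha.mul_right _ |>.mul_right _)]
  refine tsum_congr fun k => ?_
  simp_rw [mul_assoc, intervalIntegral.integral_const_mul, mul_comm (phi (k + 1) _),
    integral_tsum_mul_phi_mul_phi ha k, sq]

end SineSeries

lemma integral_sq_tsum_mul_phi_mul_phi_le {a b : ℕ → ℝ} (ha : Summable fun j => |a j|)
    (hb : Summable b) (hab : ∀ j, a j ^ 2 ≤ b j) (x : ℝ) :
    ∫ z in (0 : ℝ)..π, (∑' j, a j * phi (j + 1) x * phi (j + 1) z) ^ 2
      ≤ 2 / π * ∑' j, b j := by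
  have hbound : ∀ j, (a j * phi (j + 1) x) ^ 2 ≤ 2 / π * b j := fun j => by
    rw [mul_pow, mul_comm (2 / π)]
    exact mul_le_mul (hab j) (phi_sq_le _ _) (sq_nonneg _) ((sq_nonneg _).trans (hab j))
  rw [integral_tsum_mul_phi_sq (summable_abs_mul_phi ha x), ← tsum_mul_left]
  exact ((hb.mul_left _).of_nonneg_of_le (fun _ => sq_nonneg _) hbound).tsum_le_tsum hbound
    (hb.mul_left _)

-- The eigenvalue of `Δ²` for `φ_{j+1}`; indices are shifted by one, as in `G`.
noncomputable def eigenvalue (j : ℕ) : ℝ := ((j : ℝ) + 1) ^ 4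

lemma eigenvalue_pos (j : ℕ) : 0 < eigenvalue j := by
  unfold eigenvalue; positivity

lemma summable_eigenvalue_rpow {p : ℝ} (hp : p < -1 / 4) :
    Summable fun j => eigenvalue j ^ p := by
  have h : Summable fun n : ℕ => (n : ℝ) ^ (4 * p) := summable_nat_rpow.2 (by linarith)
  refine ((summable_nat_add_iff 1).2 h).congr fun j => ?_
  rw [eigenvalue, ← rpow_natCast, ← rpow_mul (by positivity)]
  push_cast
  ring_nf

lemma G_eq_tsum (u x z : ℝ) :
    G u x z = ∑' j, exp (-eigenvalue j * u) * phi (j + 1) x * phi (j + 1) z := rfl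

lemma exp_neg_le_rpow_neg {β y : ℝ} (hβ0 : 0 ≤ β) (hβ1 : β ≤ 1) (hy : 0 < y) :
    exp (-y) ≤ y ^ (-β) := by
  rcases le_or_gt 1 y with h | h
  · calc exp (-y) ≤ y⁻¹ := by
          rw [exp_neg]
          exact inv_anti₀ hy (by linarith [add_one_le_exp y])
      _ = y ^ (-1 : ℝ) := (rpow_neg_one y).symm
      _ ≤ y ^ (-β) := rpow_le_rpow_of_exponent_le h (by linarith)
  · calc exp (-y) ≤ 1 := exp_le_one_iff.2 (by linarith)
      _ ≤ y ^ (-β) := one_le_rpow_of_pos_of_le_one_of_nonpos hy h.le (by linarith)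

lemma exp_neg_mul_le_rpow {β κ u : ℝ} (hβ0 : 0 ≤ β) (hβ1 : β ≤ 1) (hκ : 0 < κ) (hu : 0 < u) :
    exp (-κ * u) ≤ κ ^ (-β) * u ^ (-β) := by
  rw [← mul_rpow hκ.le hu.le, neg_mul]
  exact exp_neg_le_rpow_neg hβ0 hβ1 (mul_pos hκ hu)

lemma exp_neg_mul_le_one {κ u : ℝ} (hκ : 0 ≤ κ) (hu : 0 ≤ u) : exp (-κ * u) ≤ 1 :=
  exp_le_one_iff.2 (by nlinarith)

lemma one_sub_exp_neg_sq_le_rpow {γ w : ℝ} (hγ0 : 0 ≤ γ) (hγ2 : γ ≤ 2) (hw : 0 ≤ w) :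
    (1 - exp (-w)) ^ 2 ≤ w ^ γ := by
  have h0 : 0 ≤ 1 - exp (-w) := sub_nonneg.2 (exp_le_one_iff.2 (by linarith))
  rcases le_or_gt 1 w with h | h
  · calc (1 - exp (-w)) ^ 2 ≤ 1 := pow_le_one₀ h0 (by linarith [exp_pos (-w)])
      _ ≤ w ^ γ := one_le_rpow h hγ0
  · calc (1 - exp (-w)) ^ 2 ≤ w ^ (2 : ℝ) := by
          rw [rpow_two]
          exact pow_le_pow_left₀ h0 (by linarith [add_one_le_exp (-w)]) 2
      _ ≤ w ^ γ := rpow_le_rpow_of_exponent_ge' hw h.le hγ0 hγ2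

lemma sq_exp_neg_mul_sub_le {γ β κ b δ : ℝ} (hγ0 : 0 ≤ γ) (hγ2 : γ ≤ 2) (hβ0 : 0 ≤ β)
    (hβ1 : β ≤ 1) (hκ : 0 < κ) (hb : 0 < b) (hδ : 0 ≤ δ) :
    (exp (-κ * (b + δ)) - exp (-κ * b)) ^ 2 ≤ κ ^ (γ - β) * δ ^ γ * b ^ (-β) := by
  have hsplit : exp (-κ * (b + δ)) - exp (-κ * b) = -(exp (-κ * b) * (1 - exp (-(κ * δ)))) := by
    rw [mul_sub, mul_one, ← exp_add]
    ring_nf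
  calc (exp (-κ * (b + δ)) - exp (-κ * b)) ^ 2
      = exp (-κ * b) ^ 2 * (1 - exp (-(κ * δ))) ^ 2 := by rw [hsplit]; ring
    _ ≤ exp (-κ * b) * (κ * δ) ^ γ :=
        mul_le_mul (pow_le_of_le_one (exp_pos _).le (exp_neg_mul_le_one hκ.le hb.le) two_ne_zero)
          (one_sub_exp_neg_sq_le_rpow hγ0 hγ2 (by positivity)) (sq_nonneg _) (exp_pos _).le
    _ ≤ (κ ^ (-β) * b ^ (-β)) * (κ ^ γ * δ ^ γ) := by
        rw [mul_rpow hκ.le hδ]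
        gcongr
        exact exp_neg_mul_le_rpow hβ0 hβ1 hκ hb
    _ = κ ^ (γ - β) * δ ^ γ * b ^ (-β) := by
        rw [rpow_sub hκ, rpow_neg hκ.le]
        ring

lemma summable_exp_neg_eigenvalue_mul {u : ℝ} (hu : 0 < u) :
    Summable fun j => exp (-eigenvalue j * u) :=
  ((summable_eigenvalue_rpow (p := -1) (by norm_num)).mul_right (u ^ (-1 : ℝ))).of_nonneg_of_le
    (fun _ => (exp_pos _).le) fun j => exp_neg_mul_le_rpow zero_le_one le_rfl (eigenvalue_pos j) hu

lemma integral_sq_G_le {β u : ℝ} (hβ : 1 / 4 < β) (hβ1 : β ≤ 1) (hu : 0 < u) (x : ℝ) :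
    ∫ z in (0 : ℝ)..π, |G u x z| ^ 2 ≤ 2 / π * (∑' j, eigenvalue j ^ (-β)) * u ^ (-β) := by
  simp only [sq_abs, G_eq_tsum]
  rw [mul_assoc, ← tsum_mul_right]
  refine integral_sq_tsum_mul_phi_mul_phi_le (summable_exp_neg_eigenvalue_mul hu).abs
    ((summable_eigenvalue_rpow (by linarith)).mul_right _) (fun j => ?_) x
  calc exp (-eigenvalue j * u) ^ 2 ≤ exp (-eigenvalue j * u) :=
        pow_le_of_le_one (exp_pos _).le (exp_neg_mul_le_one (eigenvalue_pos j).le hu.le)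
          two_ne_zero
    _ ≤ eigenvalue j ^ (-β) * u ^ (-β) :=
        exp_neg_mul_le_rpow (by linarith) hβ1 (eigenvalue_pos j) hu

lemma G_sub_G_eq_tsum {u v : ℝ} (hu : 0 < u) (hv : 0 < v) (x z : ℝ) :
    G u x z - G v x z = ∑' j, (exp (-eigenvalue j * u) - exp (-eigenvalue j * v))
      * phi (j + 1) x * phi (j + 1) z := by
  have hsum {w : ℝ} (hw : 0 < w) :
      Summable fun j => exp (-eigenvalue j * w) * phi (j + 1) x * phi (j + 1) z :=
    (summable_abs_mul_phi (summable_abs_mul_phi (summable_exp_neg_eigenvalue_mul hw).abs x)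
      z).of_abs
  rw [G_eq_tsum, G_eq_tsum, ← (hsum hu).tsum_sub (hsum hv)]
  exact tsum_congr fun j => by ring

lemma integral_sq_G_sub_le {γ β b δ : ℝ} (hγ0 : 0 ≤ γ) (hγ2 : γ ≤ 2) (hβ0 : 0 ≤ β)
    (hβ1 : β ≤ 1) (hγβ : γ - β < -1 / 4) (hb : 0 < b) (hδ : 0 ≤ δ) (x : ℝ) :
    ∫ z in (0 : ℝ)..π, |G (b + δ) x z - G b x z| ^ 2
      ≤ 2 / π * (∑' j, eigenvalue j ^ (γ - β)) * δ ^ γ * b ^ (-β) := by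
  simp only [sq_abs, G_sub_G_eq_tsum (by linarith : 0 < b + δ) hb]
  refine (integral_sq_tsum_mul_phi_mul_phi_le
    ((summable_exp_neg_eigenvalue_mul (by linarith)).sub (summable_exp_neg_eigenvalue_mul hb)).abs
    ((summable_eigenvalue_rpow hγβ).mul_right (δ ^ γ * b ^ (-β)))
    (fun j => ?_) x).trans_eq ?_
  · rw [← mul_assoc]
    exact sq_exp_neg_mul_sub_le hγ0 hγ2 hβ0 hβ1 (eigenvalue_pos j) hb hδ
  · rw [tsum_mul_right]
    ring

lemma intervalIntegrable_sub_rpow {p : ℝ} (hp : -1 < p) (a c : ℝ) :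
    IntervalIntegrable (fun r => (c - r) ^ p) volume a c := by
  simpa using (intervalIntegral.intervalIntegrable_rpow' hp (a := c - a) (b := c - c)).comp_sub_left c

lemma integral_sub_rpow {p : ℝ} (hp : -1 < p) (a c : ℝ) :
    ∫ r in a..c, (c - r) ^ p = (c - a) ^ (p + 1) / (p + 1) := by
  rw [intervalIntegral.integral_comp_sub_left (fun u => u ^ p) c, integral_rpow (Or.inl hp),
    sub_self, zero_rpow (by linarith), sub_zero]

/-- No integrability of `F` is needed: when it fails, the left side is `0 ≤ ∫ g`. -/
lemma intervalIntegral_le_of_nonneg_of_le {F g : ℝ → ℝ} {a c : ℝ} (hac : a ≤ c)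
    (hF : ∀ r ∈ Set.Ioo a c, 0 ≤ F r) (hFg : ∀ r ∈ Set.Ioo a c, F r ≤ g r)
    (hg : IntervalIntegrable g volume a c) :
    ∫ r in a..c, F r ≤ ∫ r in a..c, g r := by
  rw [intervalIntegral.integral_of_le hac, intervalIntegral.integral_of_le hac,
    integral_Ioc_eq_integral_Ioo, integral_Ioc_eq_integral_Ioo]
  exact integral_mono_of_nonneg (ae_restrict_of_forall_mem measurableSet_Ioo hF)
    (hg.1.mono_set Set.Ioo_subset_Ioc_self) (ae_restrict_of_forall_mem measurableSet_Ioo hFg)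

lemma integral_integral_sq_G_le {γ : ℝ} (hγ0 : 0 < γ) (hγ : γ < 3 / 4) {s t : ℝ} (hst : s ≤ t)
    (x : ℝ) :
    ∫ r in s..t, ∫ z in (0 : ℝ)..π, |G (t - r) x z| ^ 2
      ≤ 2 / π * (∑' j, eigenvalue j ^ (γ - 1)) / γ * (t - s) ^ γ := by
  calc ∫ r in s..t, ∫ z in (0 : ℝ)..π, |G (t - r) x z| ^ 2
      ≤ ∫ r in s..t, 2 / π * (∑' j, eigenvalue j ^ (γ - 1)) * (t - r) ^ (γ - 1) := by
        refine intervalIntegral_le_of_nonneg_of_le hst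
          (fun r _ => intervalIntegral.integral_nonneg pi_pos.le fun _ _ => by positivity)
          (fun r hr => ?_) ((intervalIntegrable_sub_rpow (by linarith) s t).const_mul _)
        have h := integral_sq_G_le (β := 1 - γ) (by linarith) (by linarith)
          (sub_pos.2 hr.2) x
        rwa [neg_sub] at h
    _ = 2 / π * (∑' j, eigenvalue j ^ (γ - 1)) / γ * (t - s) ^ γ := by
        rw [intervalIntegral.integral_const_mul, integral_sub_rpow (by linarith), sub_add_cancel]
        ring

lemma integral_integral_sq_G_sub_le {γ β : ℝ} (hγ0 : 0 ≤ γ) (hγ2 : γ ≤ 2) (hβ0 : 0 ≤ β)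
    (hβ1 : β < 1) (hγβ : γ - β < -1 / 4) {s t : ℝ} (hs : 0 ≤ s) (hst : s ≤ t) (x : ℝ) :
    ∫ r in (0 : ℝ)..s, ∫ z in (0 : ℝ)..π, |G (t - r) x z - G (s - r) x z| ^ 2
      ≤ 2 / π * (∑' j, eigenvalue j ^ (γ - β)) / (1 - β) * s ^ (1 - β) * (t - s) ^ γ := by
  calc ∫ r in (0 : ℝ)..s, ∫ z in (0 : ℝ)..π, |G (t - r) x z - G (s - r) x z| ^ 2
      ≤ ∫ r in (0 : ℝ)..s,
          2 / π * (∑' j, eigenvalue j ^ (γ - β)) * (t - s) ^ γ * (s - r) ^ (-β) := by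
        refine intervalIntegral_le_of_nonneg_of_le hs
          (fun r _ => intervalIntegral.integral_nonneg pi_pos.le fun _ _ => by positivity)
          (fun r hr => ?_) ((intervalIntegrable_sub_rpow (by linarith) 0 s).const_mul _)
        have h := integral_sq_G_sub_le hγ0 hγ2 hβ0 hβ1.le hγβ (sub_pos.2 hr.2)
          (sub_nonneg.2 hst) x
        rwa [sub_add_sub_cancel'] at h
    _ = 2 / π * (∑' j, eigenvalue j ^ (γ - β)) / (1 - β) * s ^ (1 - β) * (t - s) ^ γ := by
        rw [intervalIntegral.integral_const_mul, integral_sub_rpow (by linarith), sub_zero,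
          neg_add_eq_sub]
        ring

/-- For every `α ∈ (0,1)` there is `C = C(α,T) > 0` such that for all `x ∈ [0,π]`,
`0 ≤ s < t ≤ T`:
`∫_0^s ∫_0^π |G_{t−r}(x,z) − G_{s−r}(x,z)|² dz dr + ∫_s^t ∫_0^π |G_{t−r}(x,z)|² dz dr
 ≤ C|t−s|^{(3/4)α}`. -/
theorem stmt4 (T : ℝ) (hT : 0 < T) (α : ℝ) (hα : α ∈ Set.Ioo (0 : ℝ) 1) :
    ∃ C : ℝ, 0 < C ∧ ∀ x ∈ Set.Icc (0 : ℝ) Real.pi, ∀ s t : ℝ, 0 ≤ s → s < t → t ≤ T →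
      (∫ r in (0 : ℝ)..s, ∫ z in (0 : ℝ)..Real.pi,
          |G (t - r) x z - G (s - r) x z| ^ 2)
        + (∫ r in s..t, ∫ z in (0 : ℝ)..Real.pi, |G (t - r) x z| ^ 2)
      ≤ C * |t - s| ^ ((3 / 4) * α) := by
  obtain ⟨hα0, hα1⟩ := hα
  set γ := 3 / 4 * α with hγ
  -- any `β ∈ (γ + 1/4, 1)` would do
  set β := γ / 2 + 5 / 8 with hβ
  have hγ0 : 0 < γ := by positivity
  have hγ1 : γ < 3 / 4 := by linarith
  set K₁ := 2 / π * (∑' j, eigenvalue j ^ (γ - β)) / (1 - β)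
  set K₂ := 2 / π * (∑' j, eigenvalue j ^ (γ - 1)) / γ
  have hpos (p : ℝ) (j : ℕ) : 0 < eigenvalue j ^ p := rpow_pos_of_pos (eigenvalue_pos j) p
  have hK₁ : 0 ≤ K₁ :=
    div_nonneg (mul_nonneg (by positivity) (tsum_nonneg fun j => (hpos _ j).le)) (by linarith)
  have hK₂ : 0 < K₂ :=
    div_pos (mul_pos (by positivity) ((summable_eigenvalue_rpow (by linarith)).tsum_pos
      (fun j => (hpos _ j).le) 0 (hpos _ 0))) hγ0
  refine ⟨K₁ * T ^ (1 - β) + K₂, by positivity, fun x _ s t hs hst htT => ?_⟩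
  rw [abs_of_pos (sub_pos.2 hst)]
  have h₁ := integral_integral_sq_G_sub_le (γ := γ) (β := β) hγ0.le (by linarith)
    (by linarith) (by linarith) (by linarith) hs hst.le x
  have h₂ := integral_integral_sq_G_le hγ0 hγ1 hst.le x
  have hsT : K₁ * s ^ (1 - β) * (t - s) ^ γ ≤ K₁ * T ^ (1 - β) * (t - s) ^ γ := by
    gcongr <;> linarith
  linarith
end

section
/- There exists a constant C > 0 (depending only on T, not on n) such that for every integer n ≥ 2, all x, y ∈ [0,π], and every t ∈ (0,T], ∫_0^t ∫_0^π |G^n_{t−r}(x,z) − G^n_{t−r}(y,z)|² dz dr ≤ C|x−y|². -/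
/-- `λ_{j,n} = −j²·c_{j,n}` with `c_{j,n} = sin²(jπ/(2n))/(jπ/(2n))²`. -/
noncomputable def lam (n j : ℕ) : ℝ :=
  -((j : ℝ) ^ 2) * (Real.sin ((j : ℝ) * Real.pi / (2 * n)) ^ 2
    / ((j : ℝ) * Real.pi / (2 * n)) ^ 2)

/-- `κ_n(y) = h⌊y/h⌋` with `h = π/n`. -/
noncomputable def kappa (n : ℕ) (y : ℝ) : ℝ :=
  (Real.pi / n) * (⌊y / (Real.pi / n)⌋ : ℝ)

/-- Piecewise linear interpolant of `φ_j` on the grid `{kπ/n}`. -/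
noncomputable def phiI (n j : ℕ) (x : ℝ) : ℝ :=
  phi j (kappa n x) + ((n : ℝ) * x / Real.pi - (⌊x / (Real.pi / n)⌋ : ℝ))
    * (phi j (kappa n x + Real.pi / n) - phi j (kappa n x))

/-- Discrete Green function `G^n_t(x,y) = Σ_{j=1}^{n−1} e^{−λ_{j,n}²t} φ_{j,n}(x) φ_j(κ_n(y))`. -/
noncomputable def Gn (n : ℕ) (t x y : ℝ) : ℝ :=
  ∑ j ∈ Finset.Icc 1 (n - 1),
    Real.exp (-(lam n j) ^ 2 * t) * phiI n j x * phi j (kappa n y)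

/-!
Discrete orthogonality of sines makes the step functions `z ↦ φ_j(κ_n z)`, `1 ≤ j ≤ n - 1`,
orthonormal in `L²(0, π)`, so the `z`-integral of `|G^n_s(x,·) - G^n_s(y,·)|²` is
`∑_j e^{-2λ_{j,n}² s} (φ_{j,n}(x) - φ_{j,n}(y))²`. The interpolant `φ_{j,n}` is the integral of
a step function bounded by the Lipschitz constant `√(2/π) j` of `φ_j`; the time integral of
`e^{-2λ² (t-r)}` is at most `1/(2λ²)`; and Jordan's inequality `sin θ ≥ 2θ/π` gives
`λ_{j,n}² ≥ (2j/π)⁴`. Mode `j` therefore contributes at most `π³|x - y|²/(16 j²)`, and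
`∑ 1/j² ≤ 2`.
-/

open Real MeasureTheory Finset

lemma intervalIntegrable_comp_floor_div (Ψ : ℤ → ℝ) (h a b : ℝ) :
    IntervalIntegrable (fun u => Ψ ⌊u / h⌋) volume a b := by
  have hmaps : ∀ u ∈ Set.uIcc a b, ⌊u / h⌋ ∈ Finset.uIcc ⌊a / h⌋ ⌊b / h⌋ := by
    intro u hu
    have hu' : u / h ∈ Set.uIcc (a / h) (b / h) := by
      rw [← Set.image_div_const_uIcc]; exact ⟨u, hu, rfl⟩
    rw [Finset.mem_uIcc]
    exact Int.floor_mono.mapsTo_uIcc hu'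
  have hmeas : Measurable fun u => Ψ ⌊u / h⌋ :=
    measurable_from_top.comp (Int.measurable_floor.comp (measurable_id.div_const h))
  refine intervalIntegrable_iff.2 (Measure.integrableOn_of_bounded
    (M := ∑ m ∈ Finset.uIcc ⌊a / h⌋ ⌊b / h⌋, |Ψ m|) measure_Ioc_lt_top.ne
    hmeas.aestronglyMeasurable ?_)
  refine (ae_restrict_iff' measurableSet_uIoc).2 (ae_of_all _ fun u hu => ?_)
  rw [Real.norm_eq_abs]
  exact Finset.single_le_sum (f := fun m => |Ψ m|) (fun _ _ => abs_nonneg _)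
    (hmaps u (Set.uIoc_subset_uIcc hu))

section GridStep

variable {h : ℝ}

lemma integral_comp_floor_div_of_le (Ψ : ℤ → ℝ) (hh : 0 < h) (m : ℤ) {c d : ℝ}
    (hc : m * h ≤ c) (hcd : c ≤ d) (hd : d ≤ (m + 1) * h) :
    ∫ u in c..d, Ψ ⌊u / h⌋ = (d - c) * Ψ m := by
  have hfloor : ∀ u ∈ Set.Ico c d, Ψ ⌊u / h⌋ = Ψ m := fun u hu => by
    rw [Int.floor_eq_iff.2 ⟨by rw [le_div_iff₀ hh]; linarith [hu.1],
      by rw [div_lt_iff₀ hh]; linarith [hu.2]⟩]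
  rw [intervalIntegral.integral_of_le hcd, integral_Ioc_eq_integral_Ioo,
    ← integral_Ico_eq_integral_Ioo, setIntegral_congr_fun measurableSet_Ico hfloor]
  simp [hcd]

lemma integral_comp_floor_div_eq_sum (Ψ : ℤ → ℝ) (hh : 0 < h) (N : ℕ) :
    ∫ u in 0..N * h, Ψ ⌊u / h⌋ = h * ∑ m ∈ range N, Ψ m := by
  induction N with
  | zero => simp
  | succ N ih =>
    have hcell : ∫ u in N * h..(N + 1) * h, Ψ ⌊u / h⌋ = h * Ψ N := by
      rw [integral_comp_floor_div_of_le Ψ hh N (by simp) (by nlinarith) (by simp)]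
      ring
    rw [← intervalIntegral.integral_add_adjacent_intervals
      (intervalIntegrable_comp_floor_div Ψ h _ _) (intervalIntegrable_comp_floor_div Ψ h _ _),
      ih, Nat.cast_succ, hcell, sum_range_succ, mul_add]

noncomputable def gridInterp (h : ℝ) (g : ℤ → ℝ) (x : ℝ) : ℝ :=
  g ⌊x / h⌋ + (x / h - ⌊x / h⌋) * (g (⌊x / h⌋ + 1) - g ⌊x / h⌋)

lemma gridInterp_eq_integral (hh : 0 < h) (g : ℤ → ℝ) {x : ℝ} (hx : 0 ≤ x) :
    gridInterp h g x = g 0 + ∫ u in 0..x, (g (⌊u / h⌋ + 1) - g ⌊u / h⌋) / h := by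
  set Ψ : ℤ → ℝ := fun m => (g (m + 1) - g m) / h
  obtain ⟨K, hK⟩ : ∃ K : ℕ, ⌊x / h⌋ = K :=
    Int.eq_ofNat_of_zero_le (Int.floor_nonneg.2 (by positivity))
  have hKx : K * h ≤ x := by
    have := Int.floor_le (x / h)
    rw [hK, le_div_iff₀ hh] at this
    exact_mod_cast this
  have hxK : x ≤ (K + 1) * h := by
    have := Int.lt_floor_add_one (x / h)
    rw [hK, div_lt_iff₀ hh] at this
    push_cast at this
    linarith
  have hgrid : ∫ u in 0..K * h, Ψ ⌊u / h⌋ = g K - g 0 := by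
    rw [integral_comp_floor_div_eq_sum Ψ hh, mul_sum]
    simp only [Ψ, mul_div_cancel₀ _ hh.ne']
    exact_mod_cast sum_range_sub (fun m : ℕ => g m) K
  have hcell : ∫ u in K * h..x, Ψ ⌊u / h⌋ = (x - K * h) * Ψ K :=
    integral_comp_floor_div_of_le Ψ hh K (by simp) hKx (by exact_mod_cast hxK)
  rw [← intervalIntegral.integral_add_adjacent_intervals
    (intervalIntegrable_comp_floor_div Ψ h 0 (K * h)) (intervalIntegrable_comp_floor_div Ψ h _ x),
    hgrid, hcell, gridInterp, hK]
  simp only [Ψ, Int.cast_natCast]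
  field_simp
  ring

lemma abs_gridInterp_sub_le (hh : 0 < h) {g : ℤ → ℝ} {L : ℝ}
    (hg : ∀ m, |g (m + 1) - g m| ≤ L * h) {x y : ℝ} (hx : 0 ≤ x) (hy : 0 ≤ y) :
    |gridInterp h g x - gridInterp h g y| ≤ L * |x - y| := by
  have hint (a b : ℝ) := intervalIntegrable_comp_floor_div (fun m => (g (m + 1) - g m) / h) h a b
  rw [gridInterp_eq_integral hh g hx, gridInterp_eq_integral hh g hy, add_sub_add_left_eq_sub,
    intervalIntegral.integral_interval_sub_left (hint 0 x) (hint 0 y)]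
  rw [← Real.norm_eq_abs]
  refine intervalIntegral.norm_integral_le_of_norm_le_const fun u _ => ?_
  rw [Real.norm_eq_abs, abs_div, abs_of_pos hh, div_le_iff₀ hh]
  exact hg _

end GridStep

lemma abs_phi_sub_phi_le (j : ℕ) (a b : ℝ) :
    |phi j a - phi j b| ≤ √(2 / π) * j * |a - b| := by
  rw [phi, phi, ← mul_sub, abs_mul, abs_of_nonneg (Real.sqrt_nonneg _), mul_assoc]
  gcongr
  calc |sin (j * a) - sin (j * b)| ≤ |j * a - j * b| := abs_sin_sub_sin_le _ _
    _ = j * |a - b| := by rw [← mul_sub, abs_mul, Nat.abs_cast]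

lemma phiI_eq_gridInterp {n : ℕ} (hn : n ≠ 0) (j : ℕ) :
    phiI n j = gridInterp (π / n) (fun m => phi j (π / n * m)) := by
  funext x
  have hdiv : (n : ℝ) * x / π = x / (π / n) := by field_simp
  simp only [phiI, kappa, gridInterp, hdiv, Int.cast_add, Int.cast_one, mul_add, mul_one]

lemma abs_phiI_sub_le {n : ℕ} (hn : n ≠ 0) (j : ℕ) {x y : ℝ} (hx : 0 ≤ x) (hy : 0 ≤ y) :
    |phiI n j x - phiI n j y| ≤ √(2 / π) * j * |x - y| := by
  rw [phiI_eq_gridInterp hn]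
  refine abs_gridInterp_sub_le (by positivity) (fun m => ?_) hx hy
  refine (abs_phi_sub_phi_le j _ _).trans_eq ?_
  rw [Int.cast_add, Int.cast_one, mul_add_one, add_sub_cancel_left,
    abs_of_pos (by positivity)]

lemma two_mul_sin_half_mul_sum_range_cos (θ : ℝ) (N : ℕ) :
    2 * sin (θ / 2) * ∑ m ∈ range N, cos (m * θ) = sin (N * θ - θ / 2) + sin (θ / 2) := by
  induction N with
  | zero => simp
  | succ N ih =>
    rw [sum_range_succ, mul_add, ih, two_mul_sin_mul_cos, ← neg_sub (N * θ), sin_neg,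
      show ((N + 1 : ℕ) : ℝ) * θ - θ / 2 = θ / 2 + N * θ by push_cast; ring]
    ring

lemma sum_range_cos_mul_of_sin_eq_zero {θ : ℝ} {N : ℕ} (hθ : sin (θ / 2) ≠ 0)
    (hN : sin (N * θ) = 0) :
    ∑ m ∈ range N, cos (m * θ) = (1 - cos (N * θ)) / 2 := by
  have h := two_mul_sin_half_mul_sum_range_cos θ N
  rw [sin_sub, hN] at h
  apply mul_left_cancel₀ (mul_ne_zero two_ne_zero hθ)
  linear_combination h

lemma sum_range_cos_mul_int_mul_pi_div {n : ℕ} {p : ℤ} (hp : p ≠ 0) (hpn : |p| < 2 * n) :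
    ∑ m ∈ range n, cos (m * (p * π / n)) = (1 - cos (p * π)) / 2 := by
  have hn : (0 : ℝ) < n := by norm_cast; have := abs_pos.2 hp; omega
  have hpn' : |(p : ℝ)| < 2 * n := by exact_mod_cast hpn
  have hhalf : |p * π / n / 2| < π := by
    rw [div_div, abs_div, abs_mul, abs_of_pos pi_pos, abs_of_pos (by positivity : (0 : ℝ) < n * 2),
      div_lt_iff₀ (by positivity)]
    nlinarith [pi_pos]
  have hnθ : (n : ℝ) * (p * π / n) = p * π := by field_simp
  rw [sum_range_cos_mul_of_sin_eq_zero ?_ (by rw [hnθ, sin_int_mul_pi]), hnθ]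
  rw [abs_lt] at hhalf
  rw [Ne, sin_eq_zero_iff_of_lt_of_lt hhalf.1 hhalf.2]
  simp [hp, pi_ne_zero, hn.ne']

lemma sum_range_sin_mul_sin {n j k : ℕ} (hj : j ∈ Icc 1 (n - 1)) (hk : k ∈ Icc 1 (n - 1)) :
    ∑ m ∈ range n, sin (j * (π / n * m)) * sin (k * (π / n * m)) =
      if j = k then (n : ℝ) / 2 else 0 := by
  rw [mem_Icc] at hj hk
  have hprod (m : ℕ) : sin (j * (π / n * m)) * sin (k * (π / n * m)) =
      (cos (m * (((j - k : ℤ) : ℝ) * π / n)) - cos (m * (((j + k : ℤ) : ℝ) * π / n))) / 2 := by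
    rw [eq_div_iff two_ne_zero, mul_comm, ← mul_assoc, two_mul_sin_mul_sin]
    push_cast; ring_nf
  simp only [hprod, ← sum_div, sum_sub_distrib]
  rw [sum_range_cos_mul_int_mul_pi_div (p := j + k) (by omega) (by rw [abs_lt]; omega)]
  split_ifs with hjk
  · subst hjk
    have hzero : ∑ m ∈ range n, cos (m * (((j - j : ℤ) : ℝ) * π / n)) = n := by simp
    rw [hzero, show ((j + j : ℤ) : ℝ) * π = (j : ℤ) * (2 * π) by push_cast; ring,
      cos_int_mul_two_pi]
    ring
  · have hcos : cos (((j + k : ℤ) : ℝ) * π) = cos (((j - k : ℤ) : ℝ) * π) := by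
      rw [← cos_add_int_mul_two_pi (((j - k : ℤ) : ℝ) * π) k]; congr 1; push_cast; ring
    rw [sum_range_cos_mul_int_mul_pi_div (by omega) (by rw [abs_lt]; omega), hcos]
    ring

lemma intervalIntegrable_phi_kappa_mul_phi_kappa (n j k : ℕ) (a b : ℝ) :
    IntervalIntegrable (fun z => phi j (kappa n z) * phi k (kappa n z)) volume a b :=
  intervalIntegrable_comp_floor_div (fun m => phi j (π / n * m) * phi k (π / n * m)) _ a b

lemma integral_phi_kappa_mul_phi_kappa {n j k : ℕ} (hj : j ∈ Icc 1 (n - 1))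
    (hk : k ∈ Icc 1 (n - 1)) :
    ∫ z in 0..π, phi j (kappa n z) * phi k (kappa n z) = if j = k then 1 else 0 := by
  have hn : (n : ℝ) ≠ 0 := by rw [mem_Icc] at hj; norm_cast; omega
  have hgrid (m : ℕ) : phi j (π / n * m) * phi k (π / n * m) =
      2 / π * (sin (j * (π / n * m)) * sin (k * (π / n * m))) := by
    rw [phi, phi, mul_mul_mul_comm, Real.mul_self_sqrt (by positivity)]
  have hsum := integral_comp_floor_div_eq_sum (fun m => phi j (π / n * m) * phi k (π / n * m))
    (by positivity : 0 < π / n) n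
  rw [mul_div_cancel₀ _ hn] at hsum
  simp only [Int.cast_natCast, hgrid, ← mul_sum, sum_range_sin_mul_sin hj hk] at hsum
  simp only [kappa, hsum]
  split_ifs
  · field_simp
  · simp

lemma integral_sq_sum_of_orthonormal {ι : Type*} [DecidableEq ι] (s : Finset ι)
    (f : ι → ℝ → ℝ) (A : ι → ℝ) {a b : ℝ}
    (hint : ∀ j ∈ s, ∀ k ∈ s, IntervalIntegrable (fun z => f j z * f k z) volume a b)
    (horth : ∀ j ∈ s, ∀ k ∈ s, ∫ z in a..b, f j z * f k z = if j = k then 1 else 0) :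
    ∫ z in a..b, (∑ j ∈ s, A j * f j z) ^ 2 = ∑ j ∈ s, A j ^ 2 := by
  have hexpand (z : ℝ) : (∑ j ∈ s, A j * f j z) ^ 2 =
      ∑ j ∈ s, ∑ k ∈ s, A j * A k * (f j z * f k z) := by
    rw [sq, sum_mul_sum]
    exact sum_congr rfl fun j _ => sum_congr rfl fun k _ => by ring
  have hint' (j) (hj : j ∈ s) (k) (hk : k ∈ s) :=
    (hint j hj k hk).const_mul (A j * A k)
  simp only [hexpand]
  rw [intervalIntegral.integral_finsetSum fun j hj => by
    simpa only [Finset.sum_fn] using IntervalIntegrable.sum s fun k hk => hint' j hj k hk]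
  refine sum_congr rfl fun j hj => ?_
  rw [intervalIntegral.integral_finsetSum fun k hk => hint' j hj k hk]
  simp_rw [intervalIntegral.integral_const_mul]
  rw [sum_congr rfl fun k hk => by rw [horth j hj k hk]]
  simp [hj, sq]

lemma Gn_sub_Gn (n : ℕ) (t x y z : ℝ) :
    Gn n t x z - Gn n t y z = ∑ j ∈ Icc 1 (n - 1),
      exp (-lam n j ^ 2 * t) * (phiI n j x - phiI n j y) * phi j (kappa n z) := by
  rw [Gn, Gn, ← sum_sub_distrib]
  exact sum_congr rfl fun j _ => by ring

lemma integral_sq_Gn_sub (n : ℕ) (t x y : ℝ) :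
    ∫ z in 0..π, |Gn n t x z - Gn n t y z| ^ 2 =
      ∑ j ∈ Icc 1 (n - 1), (exp (-lam n j ^ 2 * t) * (phiI n j x - phiI n j y)) ^ 2 := by
  simp only [sq_abs, Gn_sub_Gn]
  exact integral_sq_sum_of_orthonormal _ (fun j z => phi j (kappa n z)) _
    (fun j _ k _ => intervalIntegrable_phi_kappa_mul_phi_kappa n j k _ _)
    (fun j hj k hk => integral_phi_kappa_mul_phi_kappa hj hk)

lemma integral_exp_neg_mul_sub_le {c : ℝ} (hc : 0 < c) (t : ℝ) :
    ∫ r in 0..t, exp (-c * (t - r)) ≤ 1 / c := by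
  rw [intervalIntegral.integral_comp_sub_left (fun s => exp (-c * s)),
    intervalIntegral.integral_comp_mul_left (fun s => exp s) (neg_ne_zero.2 hc.ne'),
    integral_exp, sub_self, sub_zero, mul_zero, exp_zero, smul_eq_mul, inv_neg, neg_mul_comm,
    neg_sub, one_div]
  exact mul_le_of_le_one_right (inv_nonneg.2 hc.le) (by linarith [exp_pos (-c * t)])

lemma pow_four_le_lam_sq {n j : ℕ} (hj : j ≤ n) : (2 / π * j) ^ 4 ≤ lam n j ^ 2 := by
  rcases Nat.eq_zero_or_pos j with rfl | hj0
  · simp [lam]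
  set θ := (j : ℝ) * π / (2 * n)
  have hn : (0 : ℝ) < n := by exact_mod_cast hj0.trans_le hj
  have hθ : 0 < θ := by positivity
  have hθ' : θ ≤ π / 2 := by
    rw [div_le_div_iff₀ (by positivity) two_pos]
    have : (j : ℝ) ≤ n := by exact_mod_cast hj
    nlinarith [pi_pos]
  have hjordan : 2 / π ≤ sin θ / θ := (le_div_iff₀ hθ).2 (mul_le_sin hθ.le hθ')
  have hlam : lam n j ^ 2 = j ^ 4 * (sin θ / θ) ^ 4 := by rw [lam]; ring
  rw [hlam, mul_pow, mul_comm]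
  gcongr

lemma integral_sq_exp_mul_phiI_sub_le {n j : ℕ} (hj : j ∈ Icc 1 (n - 1)) (t : ℝ) {x y : ℝ}
    (hx : 0 ≤ x) (hy : 0 ≤ y) :
    ∫ r in 0..t, (exp (-lam n j ^ 2 * (t - r)) * (phiI n j x - phiI n j y)) ^ 2 ≤
      π ^ 3 / 16 * |x - y| ^ 2 * ((j : ℝ) ^ 2)⁻¹ := by
  rw [mem_Icc] at hj
  have hj0 : (0 : ℝ) < j := by exact_mod_cast hj.1
  have hlam : (2 / π * j) ^ 4 ≤ lam n j ^ 2 := pow_four_le_lam_sq (by omega)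
  have hlam0 : 0 < 2 * lam n j ^ 2 := by
    have : 0 < (2 / π * j) ^ 4 := by positivity
    linarith
  have hphiI : (phiI n j x - phiI n j y) ^ 2 ≤ 2 / π * j ^ 2 * |x - y| ^ 2 := by
    calc (phiI n j x - phiI n j y) ^ 2 ≤ (√(2 / π) * j * |x - y|) ^ 2 := by
          rw [← sq_abs]; gcongr; exact abs_phiI_sub_le (by omega) j hx hy
      _ = 2 / π * j ^ 2 * |x - y| ^ 2 := by
          rw [mul_pow, mul_pow, sq_sqrt (by positivity)]
  have hsq (r : ℝ) : (exp (-lam n j ^ 2 * (t - r)) * (phiI n j x - phiI n j y)) ^ 2 =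
      (phiI n j x - phiI n j y) ^ 2 * exp (-(2 * lam n j ^ 2) * (t - r)) := by
    rw [mul_pow, sq (exp _), ← exp_add]; ring_nf
  calc ∫ r in 0..t, (exp (-lam n j ^ 2 * (t - r)) * (phiI n j x - phiI n j y)) ^ 2
      = (phiI n j x - phiI n j y) ^ 2 * ∫ r in 0..t, exp (-(2 * lam n j ^ 2) * (t - r)) := by
        simp_rw [hsq, intervalIntegral.integral_const_mul]
    _ ≤ (phiI n j x - phiI n j y) ^ 2 * (1 / (2 * (2 / π * j) ^ 4)) := by
        gcongr
        exact (integral_exp_neg_mul_sub_le hlam0 t).trans (by gcongr)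
    _ ≤ (2 / π * j ^ 2 * |x - y| ^ 2) * (1 / (2 * (2 / π * j) ^ 4)) := by gcongr
    _ = π ^ 3 / 16 * |x - y| ^ 2 * ((j : ℝ) ^ 2)⁻¹ := by
        field_simp
        ring

theorem stmt11_general (T : ℝ) :
    ∃ C : ℝ, 0 < C ∧ ∀ n : ℕ, 2 ≤ n →
      ∀ x ∈ Set.Icc (0 : ℝ) Real.pi, ∀ y ∈ Set.Icc (0 : ℝ) Real.pi,
      ∀ t ∈ Set.Ioc (0 : ℝ) T,
      (∫ r in (0 : ℝ)..t, ∫ z in (0 : ℝ)..Real.pi,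
        |Gn n (t - r) x z - Gn n (t - r) y z| ^ 2) ≤ C * |x - y| ^ 2 := by
  refine ⟨π ^ 3 / 8, by positivity, fun n _ x hx y hy t _ => ?_⟩
  have hmodes : Icc 1 (n - 1) = Ioo 0 n := by ext; simp only [mem_Icc, mem_Ioo]; omega
  calc ∫ r in 0..t, ∫ z in 0..π, |Gn n (t - r) x z - Gn n (t - r) y z| ^ 2
      = ∑ j ∈ Icc 1 (n - 1),
          ∫ r in 0..t, (exp (-lam n j ^ 2 * (t - r)) * (phiI n j x - phiI n j y)) ^ 2 := by
        simp_rw [integral_sq_Gn_sub]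
        exact intervalIntegral.integral_finsetSum fun j _ =>
          (by fun_prop : Continuous _).intervalIntegrable _ _
    _ ≤ ∑ j ∈ Icc 1 (n - 1), π ^ 3 / 16 * |x - y| ^ 2 * ((j : ℝ) ^ 2)⁻¹ :=
        sum_le_sum fun j hj => integral_sq_exp_mul_phiI_sub_le hj t hx.1 hy.1
    _ ≤ π ^ 3 / 16 * |x - y| ^ 2 * 2 := by
        rw [← mul_sum, hmodes]
        gcongr
        simpa using sum_Ioo_inv_sq_le (α := ℝ) 0 n
    _ = π ^ 3 / 8 * |x - y| ^ 2 := by ring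

/-- There exists `C = C(T) > 0` (independent of `n`) such that for every `n ≥ 2`,
`x, y ∈ [0,π]`, `t ∈ (0,T]`:
`∫_0^t ∫_0^π |G^n_{t−r}(x,z) − G^n_{t−r}(y,z)|² dz dr ≤ C|x−y|²`. -/
theorem stmt11 (T : ℝ) (hT : 0 < T) :
    ∃ C : ℝ, 0 < C ∧ ∀ n : ℕ, 2 ≤ n →
      ∀ x ∈ Set.Icc (0 : ℝ) Real.pi, ∀ y ∈ Set.Icc (0 : ℝ) Real.pi,
      ∀ t ∈ Set.Ioc (0 : ℝ) T,
      (∫ r in (0 : ℝ)..t, ∫ z in (0 : ℝ)..Real.pi,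
        |Gn n (t - r) x z - Gn n (t - r) y z| ^ 2) ≤ C * |x - y| ^ 2 :=
  stmt11_general T
end
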